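/- arXiv:1908.05594 — 5 statements merged into one kernel-verified Lean document; each statement's English description precedes it below -/
import Mathlib

section
/- Let p ≥ 5 be a prime and let a and k be integers such that 1 ≤ a ≤ p-1 and 2 ≤ k ≤ ap-2. If k ≡ ε_k (mod p-1), where ε_k = 0 if k is even and ε_k = 1 if k is odd, then v_p(s(ap, ap-k)) = (v_p(k)+1)·ε_k. -/
/-- The (unsigned) Stirling number of the first kind `s(n,k)`, defined by
`x(x+1)(x+2)⋯(x+n-1) = Σ_{k=0}^{n} s(n,k) x^k`. -/
noncomputable def stirlingFirst (n k : ℕ) : ℕ := (ascPochhammer ℕ n).coeff k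

/-!
Modulo `p`, `x (x + 1) ⋯ (x + ap - 1) ≡ (x ^ p - x) ^ a`, whose coefficients are, up to sign,
the binomial coefficients `a.choose i`, prime to `p` since `a < p`: this settles even `k`.

For odd `k`, put `N = ap` and `g(x) = (x + 1) ⋯ (x + N - 1)`, so that `s(N, j + 1)` is the
coefficient of `x ^ j` in `g`. The reflection `g(-x - N) = (-1) ^ (N - 1) g(x)`, expanded in
Taylor series and truncated using `p ^ 3 ∣ N ^ 3`, gives
`2 s(N, N - k) ≡ (N - k) N s(N, N - k + 1) - C(N - k + 1, 2) N ^ 2 s(N, N - k + 2) (mod p ^ 3)`.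
By the even case `s(N, N - k + 1)` is prime to `p`, and `v_p(N - k) = v_p(k) ≤ 1`, so the first
term on the right has valuation `v_p(k) + 1` while the other two are divisible by
`p ^ (v_p(k) + 2)`.
-/

open Polynomial Finset

theorem natCast_stirlingFirst (R : Type*) [CommSemiring R] (n k : ℕ) :
    (stirlingFirst n k : R) = (ascPochhammer R n).coeff k := by
  rw [← ascPochhammer_map (Nat.castRingHom R), coeff_map, stirlingFirst, eq_natCast]

section Reflection

variable {R : Type*} [CommRing R]

theorem coeff_comp_neg_X (f : R[X]) (m : ℕ) : (f.comp (-X)).coeff m = (-1) ^ m * f.coeff m := by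
  induction f using Polynomial.induction_on' with
  | add f g hf hg => simp [add_comp, hf, hg, mul_add]
  | monomial n a =>
    rw [← C_mul_X_pow_eq_monomial, mul_comp, C_comp, pow_comp, X_comp, neg_pow, ← C_1,
      ← C_neg, ← C_pow, mul_left_comm, coeff_C_mul, coeff_C_mul, coeff_X_pow]
    split_ifs with h
    · rw [h]
    · simp

theorem eval_eq_of_pow_three_eq_zero (f : R[X]) {x : R} (hx : x ^ 3 = 0) :
    f.eval x = f.coeff 0 + f.coeff 1 * x + f.coeff 2 * x ^ 2 := by
  have peel (g : R[X]) : g.eval x = g.divX.eval x * x + g.coeff 0 := by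
    conv_lhs => rw [← divX_mul_X_add g]
    simp
  rw [peel f, peel f.divX, peel f.divX.divX, coeff_divX, coeff_divX, coeff_divX]
  linear_combination f.divX.divX.divX.eval x * hx

theorem coeff_taylor_of_pow_three_eq_zero (f : R[X]) {c : R} (hc : c ^ 3 = 0) (m : ℕ) :
    (taylor c f).coeff m = f.coeff m + ((m + 1 : ℕ) : R) * c * f.coeff (m + 1)
      + ((m + 2).choose 2 : ℕ) * c ^ 2 * f.coeff (m + 2) := by
  rw [taylor_coeff, eval_eq_of_pow_three_eq_zero _ hc, hasseDeriv_coeff, hasseDeriv_coeff,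
    hasseDeriv_coeff, zero_add, Nat.choose_self, add_comm 1, Nat.choose_succ_self_right,
    add_comm 2, ← Nat.choose_symm_add]
  push_cast
  ring

theorem ascPochhammer_comp_neg_X_sub_natCast (n : ℕ) :
    (ascPochhammer R n).comp (-X - (n : R[X])) = (-1) ^ n * (ascPochhammer R n).comp (X + 1) := by
  induction n with
  | zero => simp
  | succ n ih =>
    conv_rhs => rw [ascPochhammer_succ_right, mul_X_add_natCast_comp]
    rw [ascPochhammer_succ_left, mul_comp, X_comp, comp_assoc, add_comp, X_comp, one_comp,
      show -X - ((n + 1 : ℕ) : R[X]) + 1 = -X - (n : R[X]) by push_cast; ring, ih]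
    push_cast
    ring

theorem natCast_stirlingFirst_succ (N m : ℕ) :
    (stirlingFirst (N + 1) (m + 1) : R) = ((ascPochhammer R N).comp (X + 1)).coeff m := by
  rw [natCast_stirlingFirst, ascPochhammer_succ_left, coeff_X_mul]

theorem stirlingFirst_relation_of_odd {N k : ℕ} (hk : k < N) (hodd : Odd k)
    (hN : (N : R) ^ 3 = 0) :
    2 * (stirlingFirst N (N - k) : R) - ((N - k : ℕ) : R) * N * stirlingFirst N (N - k + 1)
      + ((N - k + 1).choose 2 : ℕ) * N ^ 2 * stirlingFirst N (N - k + 2) = 0 := by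
  obtain ⟨m, rfl⟩ : ∃ m, N = m + k + 1 := ⟨N - k - 1, by omega⟩
  set g := (ascPochhammer R (m + k)).comp (X + 1)
  have hreflect : taylor ((m + k + 1 : ℕ) : R) (g.comp (-X)) = C ((-1) ^ (m + k)) * g := by
    rw [taylor_apply, comp_assoc, neg_comp, X_comp, comp_assoc, add_comp, X_comp, one_comp,
      show -(X + C ((m + k + 1 : ℕ) : R)) + 1 = -X - ((m + k : ℕ) : R[X]) by simp; ring,
      ascPochhammer_comp_neg_X_sub_natCast, C_pow, C_neg, C_1]
  have hcoeff := congrArg (coeff · m) hreflect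
  simp only [coeff_taylor_of_pow_three_eq_zero _ hN, coeff_comp_neg_X, coeff_C_mul] at hcoeff
  rw [show m + k + 1 - k = m + 1 by omega, show m + 1 + 1 = m + 2 from rfl,
    natCast_stirlingFirst_succ, natCast_stirlingFirst_succ, natCast_stirlingFirst_succ]
  have hsign : (-1 : R) ^ (m + k) = -(-1) ^ m := by rw [pow_add, hodd.neg_one_pow, mul_neg_one]
  have hsq : (-1 : R) ^ m * (-1) ^ m = 1 := by rw [← mul_pow]; simp
  rw [hsign] at hcoeff
  linear_combination (-1 : R) ^ m * hcoeff
    - (2 * g.coeff m - ((m + 1 : ℕ) : R) * ((m + k + 1 : ℕ) : R) * g.coeff (m + 1)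
      + ((m + 2).choose 2 : ℕ) * ((m + k + 1 : ℕ) : R) ^ 2 * g.coeff (m + 2)) * hsq

end Reflection

theorem pow_three_dvd_stirlingFirst_relation_of_odd {p N k : ℕ} (hpN : p ∣ N) (hk : k < N)
    (hodd : Odd k) :
    (p : ℤ) ^ 3 ∣ 2 * stirlingFirst N (N - k)
      - ((N - k : ℕ) : ℤ) * N * stirlingFirst N (N - k + 1)
      + ((N - k + 1).choose 2 : ℕ) * N ^ 2 * stirlingFirst N (N - k + 2) := by
  rw [← Nat.cast_pow, ← ZMod.intCast_zmod_eq_zero_iff_dvd]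
  push_cast
  refine stirlingFirst_relation_of_odd hk hodd ?_
  obtain ⟨b, rfl⟩ := hpN
  rw [Nat.cast_mul, mul_pow, ← Nat.cast_pow, ZMod.natCast_self, zero_mul]

theorem ascPochhammer_eq_prod_range (R : Type*) [CommSemiring R] (n : ℕ) :
    ascPochhammer R n = ∏ j ∈ range n, (X + (j : R[X])) := by
  induction n with
  | zero => simp
  | succ n ih => rw [ascPochhammer_succ_right, ih, prod_range_succ]

theorem FiniteField.prod_X_sub_C_eq_X_pow_card_sub_X (K : Type*) [Field K] [Fintype K] :
    ∏ b : K, (X - C b) = X ^ Fintype.card K - X := by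
  have hmonic : (X ^ Fintype.card K - X : K[X]).Monic :=
    monic_X_pow_sub (by simpa using Fintype.one_lt_card)
  have hcard := prod_multiset_X_sub_C_of_monic_of_roots_card_eq hmonic (by
    rw [FiniteField.roots_X_pow_card_sub_X,
      FiniteField.X_pow_card_sub_X_natDegree_eq _ Fintype.one_lt_card]
    rfl)
  rwa [FiniteField.roots_X_pow_card_sub_X] at hcard

theorem ZMod.ascPochhammer_prime (p : ℕ) [Fact p.Prime] :
    ascPochhammer (ZMod p) p = X ^ p - X := by
  calc ascPochhammer (ZMod p) p = ∏ b : ZMod p, (X + C b) := by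
        rw [ascPochhammer_eq_prod_range]
        refine prod_nbij' (fun j ↦ (j : ZMod p)) ZMod.val (fun _ _ ↦ mem_univ _)
          (fun b _ ↦ mem_range.mpr b.val_lt) (fun j hj ↦ ZMod.val_cast_of_lt (mem_range.mp hj))
          (fun b _ ↦ ZMod.natCast_zmod_val b) (fun _ _ ↦ by simp)
    _ = ∏ b : ZMod p, (X - C b) :=
        Fintype.prod_equiv (Equiv.neg _) _ _ (by simp [sub_eq_add_neg])
    _ = X ^ p - X := by rw [FiniteField.prod_X_sub_C_eq_X_pow_card_sub_X, ZMod.card]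

theorem ZMod.ascPochhammer_mul_prime (p a : ℕ) [Fact p.Prime] :
    ascPochhammer (ZMod p) (a * p) = (X ^ p - X) ^ a := by
  induction a with
  | zero => simp
  | succ a ih =>
    rw [add_one_mul, ← ascPochhammer_mul, ih, ZMod.ascPochhammer_prime, pow_succ]
    simp

theorem coeff_X_pow_succ_sub_X_pow {R : Type*} [CommRing R] {d : ℕ} (hd : 0 < d) {a i : ℕ}
    (hi : i ≤ a) :
    ((X ^ (d + 1) - X : R[X]) ^ a).coeff (a + (a - i) * d) = (-1) ^ i * a.choose i := by
  have hfactor : (X ^ (d + 1) - X : R[X]) = X * expand R d (X + C (-1)) := by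
    simp only [map_add, map_neg, map_one, expand_X]
    ring
  rw [hfactor, mul_pow, ← map_pow, coeff_X_pow_mul', if_pos (by omega), Nat.add_sub_cancel_left,
    coeff_expand hd, if_pos (dvd_mul_left _ _), Nat.mul_div_cancel _ hd, coeff_X_add_C_pow,
    Nat.sub_sub_self hi, Nat.choose_symm hi]

theorem Nat.Prime.not_dvd_choose_of_lt {p a i : ℕ} (hp : p.Prime) (ha : a < p) (hi : i ≤ a) :
    ¬ p ∣ a.choose i := fun h ↦ by
  have hfac : a.choose i ∣ a.factorial :=
    ⟨i.factorial * (a - i).factorial,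
      by rw [← mul_assoc, Nat.choose_mul_factorial_mul_factorial hi]⟩
  exact absurd ((hp.dvd_factorial).mp (h.trans hfac)) (by omega)

theorem prime_not_dvd_stirlingFirst_mul_prime_sub {p a k : ℕ} [hp : Fact p.Prime] (ha : a < p)
    (hk : k < a * p) (hdvd : p - 1 ∣ k) : ¬ p ∣ stirlingFirst (a * p) (a * p - k) := by
  obtain ⟨d, rfl⟩ : ∃ d, p = d + 1 := ⟨p - 1, (Nat.sub_add_cancel hp.out.one_le).symm⟩
  obtain ⟨i, rfl⟩ := hdvd
  rw [Nat.add_sub_cancel] at hk ⊢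
  have hi : i ≤ a := by nlinarith
  have hd : 0 < d := by have := hp.out.two_le; omega
  have hindex : a * (d + 1) - d * i = a + (a - i) * d := by
    zify [hk.le, hi]
    ring
  rw [← ZMod.natCast_eq_zero_iff, natCast_stirlingFirst, ZMod.ascPochhammer_mul_prime, hindex,
    coeff_X_pow_succ_sub_X_pow hd hi, mul_eq_zero, ZMod.natCast_eq_zero_iff, not_or]
  exact ⟨pow_ne_zero _ (neg_ne_zero.mpr one_ne_zero), hp.out.not_dvd_choose_of_lt ha hi⟩

theorem padicValInt_eq_of_dvd_sub {p : ℕ} [Fact p.Prime] {x y : ℤ} (hy : y ≠ 0)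
    (hxy : (p : ℤ) ^ (padicValInt p y + 1) ∣ x - y) : padicValInt p x = padicValInt p y := by
  have hy_not : ¬ (p : ℤ) ^ (padicValInt p y + 1) ∣ y := by simp [padicValInt_dvd_iff, hy]
  have hx_not : ¬ (p : ℤ) ^ (padicValInt p y + 1) ∣ x := fun hx ↦
    hy_not (by simpa using dvd_sub hx hxy)
  have hx : (p : ℤ) ^ padicValInt p y ∣ x := by
    simpa using dvd_add (padicValInt_dvd y) ((pow_dvd_pow _ (Nat.le_succ _)).trans hxy)
  rw [padicValInt_dvd_iff] at hx hx_not
  omega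

theorem padicValInt_two_mul {p : ℕ} [hp : Fact p.Prime] (hp2 : p ≠ 2) (x : ℤ) :
    padicValInt p (2 * x) = padicValInt p x := by
  rcases eq_or_ne x 0 with rfl | hx
  · simp
  have hp_not_dvd_two : ¬ (p : ℤ) ∣ 2 := by
    exact_mod_cast (Nat.prime_dvd_prime_iff_eq hp.out Nat.prime_two).not.mpr hp2
  rw [padicValInt.mul two_ne_zero hx, padicValInt.eq_zero_of_not_dvd hp_not_dvd_two, zero_add]

theorem Nat.dvd_choose_succ_two_of_dvd {m n : ℕ} (hm : m.Coprime 2) (h : m ∣ n) :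
    m ∣ (n + 1).choose 2 := by
  have h2 : (n + 1).choose 2 * 2 = (n + 1) * n := by
    simpa using Nat.choose_succ_right_eq (n + 1) 1
  exact hm.dvd_of_dvd_mul_right (h2 ▸ h.mul_left _)

theorem padicValNat_mul_prime_sub {p a k : ℕ} [hp : Fact p.Prime] (ha : a ≤ p) (hk0 : 0 < k)
    (hk : k < a * p) : padicValNat p (a * p - k) = padicValNat p k := by
  by_cases hpk : p ∣ k
  · obtain ⟨j, rfl⟩ := hpk
    have hj : 0 < j ∧ j < a := ⟨Nat.pos_of_mul_pos_left hk0, by nlinarith⟩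
    have hp1 := hp.out.one_lt
    rw [mul_comm a, ← Nat.mul_sub, padicValNat.mul (by omega) (by omega),
      padicValNat.mul (by omega) (by omega), padicValNat.self hp1,
      padicValNat.eq_zero_of_not_dvd (Nat.not_dvd_of_pos_of_lt (by omega) (by omega)),
      padicValNat.eq_zero_of_not_dvd (Nat.not_dvd_of_pos_of_lt hj.1 (by omega))]
  · have hpN : ¬ p ∣ a * p - k := fun h ↦
      hpk (by simpa [Nat.sub_sub_self hk.le] using Nat.dvd_sub (dvd_mul_left p a) h)
    rw [padicValNat.eq_zero_of_not_dvd hpk, padicValNat.eq_zero_of_not_dvd hpN]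

theorem padicValNat_stirlingFirst_mul_prime_sub_of_odd {p a k : ℕ} [hp : Fact p.Prime]
    (hp2 : p ≠ 2) (ha : a < p) (hk : k < a * p) (hodd : Odd k)
    (hS₁ : ¬ p ∣ stirlingFirst (a * p) (a * p - k + 1)) :
    padicValNat p (stirlingFirst (a * p) (a * p - k)) = padicValNat p k + 1 := by
  have hrel := pow_three_dvd_stirlingFirst_relation_of_odd (dvd_mul_left p a) hk hodd
  set N := a * p with hN
  set S₀ := stirlingFirst N (N - k)
  set S₁ := stirlingFirst N (N - k + 1)
  set S₂ := stirlingFirst N (N - k + 2)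
  set c := (N - k + 1).choose 2
  set v := padicValNat p k
  have hp1 := hp.out.one_lt
  have ha0 : 0 < a := Nat.pos_of_mul_pos_right (hodd.pos.trans hk)
  have hv : padicValNat p (N - k) = v := padicValNat_mul_prime_sub ha.le hodd.pos hk
  have hv1 : v ≤ 1 := by
    -- `k < a p < p ^ 2`
    by_contra! h
    have := Nat.le_of_dvd hodd.pos ((padicValNat_dvd_iff_le hodd.pos.ne').mpr h)
    nlinarith [pow_le_pow_right₀ hp1.le h]
  have hc : p ^ v ∣ c := Nat.dvd_choose_succ_two_of_dvd
    (((Nat.coprime_primes hp.out Nat.prime_two).mpr hp2).pow_left v) (hv ▸ pow_padicValNat_dvd)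
  have hdiff : (p : ℤ) ^ (v + 2) ∣ 2 * S₀ - ((N - k) * N * S₁ : ℕ) := by
    have hp3 : (p : ℤ) ^ (v + 2) ∣ (p : ℤ) ^ 3 := pow_dvd_pow _ (by omega)
    have hcN : (p : ℤ) ^ (v + 2) ∣ c * N ^ 2 * S₂ := by
      rw [pow_add]
      exact (mul_dvd_mul (by exact_mod_cast hc) (pow_dvd_pow_of_dvd (by simp [hN]) 2)).mul_right _
    have h := dvd_sub (hp3.trans hrel) hcN
    rwa [add_sub_cancel_right, ← Nat.cast_mul, ← Nat.cast_mul] at h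
  have hS₁0 : S₁ ≠ 0 := fun h ↦ hS₁ (h ▸ dvd_zero p)
  have hNk0 : N - k ≠ 0 := by omega
  have hN0 : N ≠ 0 := by omega
  have hval : padicValNat p ((N - k) * N * S₁) = v + 1 := by
    rw [padicValNat.mul (Nat.mul_ne_zero hNk0 hN0) hS₁0, padicValNat.mul hNk0 hN0, hv, hN,
      padicValNat.mul ha0.ne' (by omega), padicValNat.self hp1,
      padicValNat.eq_zero_of_not_dvd hS₁,
      padicValNat.eq_zero_of_not_dvd (Nat.not_dvd_of_pos_of_lt ha0 ha)]
  have h := padicValInt_eq_of_dvd_sub (x := 2 * S₀)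
    (Nat.cast_ne_zero.mpr (Nat.mul_ne_zero (Nat.mul_ne_zero hNk0 hN0) hS₁0))
    (by rwa [padicValInt.of_nat, hval])
  rwa [padicValInt_two_mul hp2, padicValInt.of_nat, padicValInt.of_nat, hval] at h

theorem stmt0_general (p a k : ℕ) (hp : p.Prime) (hp5 : 5 ≤ p)
    (ha : a ≤ p - 1) (hk2 : 2 ≤ k) (hk : k ≤ a * p - 2)
    (hcong : k ≡ (if Even k then 0 else 1) [MOD p - 1]) :
    padicValNat p (stirlingFirst (a * p) (a * p - k)) =
      (padicValNat p k + 1) * (if Even k then 0 else 1) := by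
  have := Fact.mk hp
  have hap : a < p := by omega
  rcases Nat.even_or_odd k with heven | hodd
  · rw [if_pos heven] at hcong ⊢
    exact padicValNat.eq_zero_of_not_dvd <| prime_not_dvd_stirlingFirst_mul_prime_sub hap
      (by omega) (Nat.modEq_zero_iff_dvd.mp hcong)
  · rw [if_neg (Nat.not_even_iff_odd.mpr hodd)] at hcong ⊢
    have hS₁ := prime_not_dvd_stirlingFirst_mul_prime_sub hap (k := k - 1) (by omega)
      ((Nat.modEq_iff_dvd' hodd.pos).mp hcong.symm)
    rw [show a * p - (k - 1) = a * p - k + 1 by omega] at hS₁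
    rw [mul_one,
      padicValNat_stirlingFirst_mul_prime_sub_of_odd (by omega) hap (by omega) hodd hS₁]

theorem stmt0 (p a k : ℕ) (hp : p.Prime) (hp5 : 5 ≤ p)
    (ha1 : 1 ≤ a) (ha : a ≤ p - 1) (hk2 : 2 ≤ k) (hk : k ≤ a * p - 2)
    (hcong : k ≡ (if Even k then 0 else 1) [MOD p - 1]) :
    padicValNat p (stirlingFirst (a * p) (a * p - k)) =
      (padicValNat p k + 1) * (if Even k then 0 else 1) :=
  stmt0_general p a k hp hp5 ha hk2 hk hcong
end

section
/- Let p ≥ 5 be a prime and let a and k be integers such that 4 ≤ a ≤ p-1 and a(p-1)+2 ≤ k ≤ ap-2. Then v_p(s(ap, ap-k)) ≥ a + k - ap. -/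
open Polynomial

section CoeffDvd

variable {R : Type*} [CommSemiring R] (r : R)

theorem pow_sub_dvd_coeff_mul {P Q : R[X]} {a b : ℕ} (hP : ∀ i, r ^ (a - i) ∣ P.coeff i)
    (hQ : ∀ j, r ^ (b - j) ∣ Q.coeff j) (m : ℕ) : r ^ (a + b - m) ∣ (P * Q).coeff m := by
  rw [coeff_mul]
  refine Finset.dvd_sum fun ⟨i, j⟩ hij => ?_
  rw [Finset.HasAntidiagonal.mem_antidiagonal] at hij
  calc r ^ (a + b - m) ∣ r ^ (a - i) * r ^ (b - j) := by
        rw [← pow_add]; exact pow_dvd_pow r (by omega)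
    _ ∣ P.coeff i * Q.coeff j := mul_dvd_mul (hP i) (hQ j)

theorem pow_one_sub_dvd_coeff {Q : R[X]} (hQ : r ∣ Q.coeff 0) (j : ℕ) :
    r ^ (1 - j) ∣ Q.coeff j := by
  rcases j with _ | j
  · simpa using hQ
  · simp

end CoeffDvd

theorem dvd_ascPochhammer_eval_self {S : Type*} [CommSemiring S] {n : ℕ} (hn : n ≠ 0) (x : S) :
    x ∣ (ascPochhammer S n).eval x := by
  obtain ⟨n, rfl⟩ := Nat.exists_eq_succ_of_ne_zero hn
  rw [ascPochhammer_succ_left, eval_mul, eval_X]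
  exact dvd_mul_right x _

theorem dvd_coeff_zero_ascPochhammer_comp {p : ℕ} (hp : p ≠ 0) (c : ℕ) :
    p ∣ ((ascPochhammer ℕ p).comp (X + ((c * p : ℕ) : ℕ[X]))).coeff 0 := by
  rw [coeff_zero_eq_eval_zero, eval_comp, eval_add, eval_X, eval_natCast, zero_add]
  exact (dvd_mul_left p c).trans (dvd_ascPochhammer_eval_self hp _)

theorem pow_sub_dvd_ascPochhammer_mul_coeff {p : ℕ} (hp : p ≠ 0) (a m : ℕ) :
    p ^ (a - m) ∣ (ascPochhammer ℕ (a * p)).coeff m := by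
  induction a generalizing m with
  | zero => rcases m with _ | m <;> simp
  | succ c ih =>
    rw [add_mul, one_mul, ← ascPochhammer_mul]
    exact pow_sub_dvd_coeff_mul p ih
      (pow_one_sub_dvd_coeff p (dvd_coeff_zero_ascPochhammer_comp hp c)) m

theorem ascPochhammer_nat_coeff_pos {n m : ℕ} (hm : m ≠ 0) (hmn : m ≤ n) :
    0 < (ascPochhammer ℕ n).coeff m := by
  induction n with
  | zero => omega
  | succ n ih =>
    rcases hmn.eq_or_lt with rfl | hmn
    · have h := (monic_ascPochhammer ℕ (n + 1)).coeff_natDegree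
      rw [ascPochhammer_natDegree] at h
      omega
    · calc 0 < (ascPochhammer ℕ n).coeff m * n := Nat.mul_pos (ih (by omega)) (by omega)
        _ = ((ascPochhammer ℕ n) * (n : ℕ[X])).coeff m := by
          rw [← C_eq_natCast, coeff_mul_C, Nat.cast_id]
        _ ≤ (ascPochhammer ℕ (n + 1)).coeff m := by
          rw [ascPochhammer_succ_right, mul_add, coeff_add]
          exact Nat.le_add_left _ _

theorem stmt3_general (p a k : ℕ) (hp : p.Prime)
    (hk2 : k ≤ a * p - 2) :
    (padicValNat p (stirlingFirst (a * p) (a * p - k)) : ℤ) ≥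
      (a : ℤ) + (k : ℤ) - (a : ℤ) * (p : ℤ) := by
  have hap : a ≤ a * p := Nat.le_mul_of_pos_right a hp.pos
  have hcast : ((a * p : ℕ) : ℤ) = a * p := Nat.cast_mul a p
  rcases le_or_gt (a + k) (a * p) with hle | hlt
  · omega
  have hdvd := pow_sub_dvd_ascPochhammer_mul_coeff hp.ne_zero a (a * p - k)
  have hpos : 0 < stirlingFirst (a * p) (a * p - k) :=
    ascPochhammer_nat_coeff_pos (by omega) (by omega)
  have hval := (padicValNat_dvd_iff_le_of_ne_one hp.ne_one hpos.ne').mp hdvd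
  omega

theorem stmt3 (p a k : ℕ) (hp : p.Prime) (hp5 : 5 ≤ p)
    (ha4 : 4 ≤ a) (ha : a ≤ p - 1)
    (hk1 : a * (p - 1) + 2 ≤ k) (hk2 : k ≤ a * p - 2) :
    (padicValNat p (stirlingFirst (a * p) (a * p - k)) : ℤ) ≥
      (a : ℤ) + (k : ℤ) - (a : ℤ) * (p : ℤ) :=
  stmt3_general p a k hp hk2
end

section
/- Let p be an odd prime and let r ≥ 1 be an odd integer with p ≥ r+4. Then H(p-1, r) ≡ (1/r)·H_{p-1}^{(r)} (mod p^3), i.e., v_p(H(p-1,r) - (1/r)·H_{p-1}^{(r)}) ≥ 3 (with the convention that this difference may be zero). -/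
/-!
By Newton's identities,
`r H(p-1,r) - H_{p-1}^{(r)} = Σ_{j=1}^{r-1} (-1)^(j+1) H(p-1,r-j) H_{p-1}^{(j)}`.
The power sums satisfy `H_{p-1}^{(m)} ≡ 0 (mod p)` for `1 ≤ m ≤ p - 2`, because
`Σ_{x ∈ 𝔽_p^×} x^(-m) = 0`, and `H_{p-1}^{(m)} ≡ 0 (mod p²)` for odd `m ≤ p - 4`, by pairing
`i` with `p - i`. Newton's identities pass both congruences on to the `H(p-1,j)`. In each term
of the sum one of `j` and `r - j` is odd, so every term is divisible by `p³`.
-/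

/-- `H(n,k)`: the `k`-th elementary symmetric function of `1, 1/2, ..., 1/n`. -/
def elemSymH (n k : ℕ) : ℚ :=
  ∑ t ∈ (Finset.Icc 1 n).powersetCard k, ∏ i ∈ t, (1 : ℚ) / (i : ℚ)

/-- The generalized harmonic number `H_n^{(r)} = Σ_{i=1}^{n} 1/i^r`. -/
def genHarmonic (n r : ℕ) : ℚ := ∑ i ∈ Finset.Icc 1 n, (1 : ℚ) / (i : ℚ) ^ r

open Finset

section Newton

variable {ι R : Type*} [CommRing R]

lemma MvPolynomial.aeval_esymm_coe_finset (s : Finset ι) (f : ι → R) (n : ℕ) :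
    aeval (fun i : s => f i) (esymm s R n) = ∑ t ∈ s.powersetCard n, ∏ i ∈ t, f i := by
  rw [aeval_esymm_eq_multiset_esymm, ← Finset.esymm_map_val, univ_eq_attach, attach_val]
  exact congrArg (Multiset.esymm · n) (Multiset.attach_map_val' s.val f)

lemma MvPolynomial.aeval_psum_coe_finset (s : Finset ι) (f : ι → R) (n : ℕ) :
    aeval (fun i : s => f i) (psum s R n) = ∑ i ∈ s, f i ^ n := by
  simp [psum, univ_eq_attach, sum_attach s (fun i => f i ^ n)]

theorem Finset.mul_sum_powersetCard_prod_eq_sum (s : Finset ι) (f : ι → R) {k : ℕ}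
    (hk : 1 ≤ k) :
    k * ∑ t ∈ s.powersetCard k, ∏ i ∈ t, f i = ∑ j ∈ Icc 1 k,
      (-1) ^ (j + 1) * (∑ t ∈ s.powersetCard (k - j), ∏ i ∈ t, f i) *
        ∑ i ∈ s, f i ^ j := by
  have h := congrArg (MvPolynomial.aeval (fun i : s => f i)) (MvPolynomial.mul_esymm_eq_sum s R k)
  simp only [map_mul, map_sum, map_pow, map_neg, map_one, map_natCast,
    MvPolynomial.aeval_esymm_coe_finset, MvPolynomial.aeval_psum_coe_finset] at h
  rw [h, mul_sum]
  refine sum_nbij' Prod.snd (fun j => (k - j, j)) ?_ ?_ ?_ (fun _ _ => rfl) ?_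
  · intro a ha
    simp only [mem_filter, HasAntidiagonal.mem_antidiagonal] at ha
    simp only [mem_Icc]
    omega
  · intro j hj
    simp only [mem_Icc] at hj
    simp only [mem_filter, HasAntidiagonal.mem_antidiagonal]
    omega
  · intro a ha
    simp only [mem_filter, HasAntidiagonal.mem_antidiagonal] at ha
    ext <;> simp only; omega
  · rintro ⟨i, j⟩ hij
    simp only [mem_filter, HasAntidiagonal.mem_antidiagonal] at hij
    obtain ⟨rfl, -⟩ := hij
    have hsign : (-1 : R) ^ (i + j + 1) * (-1) ^ i = (-1) ^ (j + 1) := by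
      rw [← pow_add, show i + j + 1 + i = 2 * i + (j + 1) by ring, pow_add, pow_mul, neg_one_sq,
        one_pow, one_mul]
    rw [Nat.add_sub_cancel, ← hsign]
    ring

end Newton

lemma mul_elemSymH_eq_sum (n : ℕ) {k : ℕ} (hk : 1 ≤ k) :
    k * elemSymH n k =
      ∑ j ∈ Icc 1 k, (-1) ^ (j + 1) * elemSymH n (k - j) * genHarmonic n j := by
  simpa only [elemSymH, genHarmonic, div_pow, one_pow] using
    mul_sum_powersetCard_prod_eq_sum (Icc 1 n) (fun i : ℕ => (1 : ℚ) / i) hk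

lemma mul_elemSymH_sub_genHarmonic (n : ℕ) {k : ℕ} (hk : Odd k) :
    k * elemSymH n k - genHarmonic n k =
      ∑ j ∈ Icc 1 (k - 1), (-1) ^ (j + 1) * elemSymH n (k - j) * genHarmonic n j := by
  obtain ⟨l, rfl⟩ : ∃ l, k = l + 1 := ⟨k - 1, (Nat.sub_add_cancel hk.pos).symm⟩
  have he0 : elemSymH n 0 = 1 := by simp [elemSymH]
  rw [mul_elemSymH_eq_sum n (Nat.le_add_left 1 l), sum_Icc_succ_top (Nat.le_add_left 1 l),
    Nat.sub_self, he0, (hk.add_odd odd_one).neg_one_pow, Nat.add_sub_cancel]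
  ring

/-- `p ^ k` divides `x` in `ℤ_(p)`, i.e. `v_p(x) ≥ k` or `x = 0`. It is irreducible so that
exponents such as `a + b` are matched by unification instead of by unfolding `padicNorm`. -/
@[irreducible] def PadicPowDvd (p k : ℕ) (x : ℚ) : Prop :=
  padicNorm p x ≤ (p : ℚ) ^ (-(k : ℤ))

namespace PadicPowDvd

variable {p k l : ℕ} [hp : Fact p.Prime] {x y : ℚ}

lemma add (hx : PadicPowDvd p k x) (hy : PadicPowDvd p k y) : PadicPowDvd p k (x + y) := by
  rw [PadicPowDvd] at *
  exact padicNorm.nonarchimedean.trans (max_le hx hy)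

lemma sub (hx : PadicPowDvd p k x) (hy : PadicPowDvd p k y) : PadicPowDvd p k (x - y) := by
  rw [PadicPowDvd] at *
  exact padicNorm.sub.trans (max_le hx hy)

lemma sum {ι : Type*} {s : Finset ι} {f : ι → ℚ} (h : ∀ i ∈ s, PadicPowDvd p k (f i)) :
    PadicPowDvd p k (∑ i ∈ s, f i) := by
  simp only [PadicPowDvd] at *
  exact padicNorm.sum_le' h (by positivity)

lemma mul (hx : PadicPowDvd p k x) (hy : PadicPowDvd p l y) : PadicPowDvd p (k + l) (x * y) := by
  rw [PadicPowDvd] at *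
  rw [padicNorm.mul, Nat.cast_add, neg_add, zpow_add₀ (by exact_mod_cast hp.out.ne_zero)]
  exact mul_le_mul hx hy (padicNorm.nonneg _) (by positivity)

lemma intCast_iff {z : ℤ} : PadicPowDvd p k z ↔ (p : ℤ) ^ k ∣ z := by
  rw [PadicPowDvd, ← padicNorm.dvd_iff_norm_le, Nat.cast_pow]

lemma intCast (z : ℤ) : PadicPowDvd p 0 z :=
  intCast_iff.2 (by simp)

lemma natCast (n : ℕ) : PadicPowDvd p 0 n := by
  simpa using intCast (p := p) n

lemma one : PadicPowDvd p 0 1 := by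
  simpa using natCast (p := p) 1

lemma neg_one_pow (n : ℕ) : PadicPowDvd p 0 ((-1) ^ n) := by
  simpa using intCast (p := p) ((-1) ^ n)

lemma self : PadicPowDvd p 1 p := by
  rw [PadicPowDvd, padicNorm.padicNorm_p_of_prime, Nat.cast_one, zpow_neg_one]

lemma prod {ι : Type*} {s : Finset ι} {f : ι → ℚ} (h : ∀ i ∈ s, PadicPowDvd p 0 (f i)) :
    PadicPowDvd p 0 (∏ i ∈ s, f i) :=
  prod_induction f _ (fun _ _ hx hy => hx.mul hy) one h

lemma div_natCast (hx : PadicPowDvd p k x) {b : ℕ} (hb : ¬p ∣ b) :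
    PadicPowDvd p k (x / b) := by
  rw [PadicPowDvd] at *
  rwa [padicNorm.div, (padicNorm.nat_eq_one_iff b).2 hb, div_one]

lemma of_natCast_mul {b : ℕ} (hb : ¬p ∣ b) (h : PadicPowDvd p k (b * x)) :
    PadicPowDvd p k x := by
  rw [PadicPowDvd] at *
  rwa [padicNorm.mul, (padicNorm.nat_eq_one_iff b).2 hb, one_mul] at h

lemma eq_zero_or_le_padicValRat (h : PadicPowDvd p k x) :
    x = 0 ∨ (k : ℤ) ≤ padicValRat p x := by
  refine or_iff_not_imp_left.2 fun hx => ?_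
  rw [PadicPowDvd, padicNorm.eq_zpow_of_nonzero hx,
    zpow_le_zpow_iff_right₀ (by exact_mod_cast hp.out.one_lt)] at h
  omega

end PadicPowDvd

namespace ZMod

variable {p : ℕ}

lemma sum_Icc_natCast_eq_sum [NeZero p] {M : Type*} [AddCommMonoid M] (g : ZMod p → M)
    (hg : g 0 = 0) : ∑ i ∈ Icc 1 (p - 1), g i = ∑ x, g x := by
  classical
  have hp := NeZero.pos p
  rw [← sum_erase univ hg]
  refine sum_nbij' (fun i => (i : ZMod p)) (fun x => x.val) (fun i hi => ?_) (fun x hx => ?_)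
    (fun i hi => ?_) (fun x _ => natCast_zmod_val x) (fun _ _ => rfl)
  · simp only [mem_Icc] at hi
    simp only [mem_erase, mem_univ, and_true, ne_eq, natCast_eq_zero_iff]
    exact fun h => absurd (Nat.le_of_dvd (by omega) h) (by omega)
  · have := val_lt x
    have : x.val ≠ 0 := (val_ne_zero x).2 (ne_of_mem_erase hx)
    simp only [mem_Icc]
    omega
  · simp only [mem_Icc] at hi
    exact val_natCast_of_lt (by omega)

lemma sum_inv_pow_eq_zero [Fact p.Prime] {m : ℕ} (hm : m < p - 1) :
    ∑ x : ZMod p, x⁻¹ ^ m = 0 :=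
  (Equiv.sum_comp (Equiv.inv (ZMod p)) (· ^ m)).trans
    (FiniteField.sum_pow_lt_card_sub_one _ m (by rwa [ZMod.card]))

end ZMod

lemma sq_dvd_pow_succ_add_mul_sub_pow {m : ℕ} (hm : Odd m) (p i : ℤ) :
    p ^ 2 ∣ i ^ (m + 1) + i * (p - i) ^ m + m * p * (p - i) ^ m := by
  obtain ⟨c, hc⟩ := sq_dvd_add_pow_sub_sub p (-i) m
  rw [hm.neg_pow, (Nat.Odd.sub_odd hm odd_one).neg_pow, neg_add_eq_sub] at hc
  obtain ⟨k, rfl⟩ := hm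
  rw [Nat.add_sub_cancel] at hc
  exact ⟨(i + (2 * k + 1 : ℕ) * p) * c + (2 * k + 1 : ℕ) ^ 2 * i ^ (2 * k), by
    linear_combination (i + (2 * k + 1 : ℕ) * p) * hc⟩

lemma genHarmonic_eq_sum_reflect (n m : ℕ) :
    genHarmonic n m = ∑ i ∈ Icc 1 n, 1 / ((n + 1 - i : ℕ) : ℚ) ^ m := by
  refine sum_nbij' (fun i => n + 1 - i) (fun i => n + 1 - i) ?_ ?_ ?_ ?_ ?_ <;> intro i hi <;>
    simp only [mem_Icc] at hi ⊢ <;> first | omega | rw [Nat.sub_sub_self (by omega)]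

section Congruences

variable {p : ℕ} [hp : Fact p.Prime]

lemma padicPowDvd_one_div_pow_sub_pow {i : ℕ} (hi : ¬p ∣ i) {a : ℤ}
    (ha : (a : ZMod p) * i = 1) (m : ℕ) :
    PadicPowDvd p 1 (1 / (i : ℚ) ^ m - (a : ℚ) ^ m) := by
  have hi0 : (i : ℚ) ≠ 0 := by
    exact_mod_cast fun h : i = 0 => hi (h ▸ dvd_zero p)
  have key : 1 / (i : ℚ) ^ m - (a : ℚ) ^ m =
      ((1 - (a * i) ^ m : ℤ) : ℚ) / ((i ^ m : ℕ) : ℚ) := by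
    push_cast
    field_simp
    ring
  rw [key]
  refine PadicPowDvd.div_natCast (PadicPowDvd.intCast_iff.2 ?_)
    fun h => hi (hp.out.dvd_of_dvd_pow h)
  rw [pow_one, ← ZMod.intCast_zmod_eq_zero_iff_dvd]
  push_cast
  rw [ha, one_pow, sub_self]

theorem padicPowDvd_one_genHarmonic {m : ℕ} (hm1 : 1 ≤ m) (hmp : m + 2 ≤ p) :
    PadicPowDvd p 1 (genHarmonic (p - 1) m) := by
  set a : ℕ → ℤ := fun i => (((i : ZMod p)⁻¹).val : ℤ)
  have hsplit : genHarmonic (p - 1) m =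
      ∑ i ∈ Icc 1 (p - 1), (1 / (i : ℚ) ^ m - (a i : ℚ) ^ m)
        + ((∑ i ∈ Icc 1 (p - 1), a i ^ m : ℤ) : ℚ) := by
    rw [genHarmonic, sum_sub_distrib]
    push_cast
    ring
  rw [hsplit]
  refine (PadicPowDvd.sum fun i hi => ?_).add (PadicPowDvd.intCast_iff.2 ?_)
  · rw [mem_Icc] at hi
    have hpi : ¬p ∣ i := Nat.not_dvd_of_pos_of_lt hi.1 (by omega)
    refine padicPowDvd_one_div_pow_sub_pow hpi ?_ m
    rw [Int.cast_natCast, ZMod.natCast_zmod_val, inv_mul_cancel₀]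
    rwa [Ne, ZMod.natCast_eq_zero_iff]
  · rw [pow_one, ← ZMod.intCast_zmod_eq_zero_iff_dvd]
    push_cast
    simp only [a, Int.cast_natCast, ZMod.natCast_zmod_val]
    rw [ZMod.sum_Icc_natCast_eq_sum (fun x : ZMod p => x⁻¹ ^ m) (by simp; omega)]
    exact ZMod.sum_inv_pow_eq_zero (by omega)

lemma padicPowDvd_two_reflect {m i : ℕ} (hm : Odd m) (hi1 : 1 ≤ i) (hip : i < p) :
    PadicPowDvd p 2
      (1 / ((p - i : ℕ) : ℚ) ^ m + 1 / (i : ℚ) ^ m + m * p * (1 / (i : ℚ) ^ (m + 1))) := by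
  have hpi : ¬p ∣ i := Nat.not_dvd_of_pos_of_lt hi1 hip
  have hpi' : ¬p ∣ p - i := Nat.not_dvd_of_pos_of_lt (by omega) (by omega)
  have key : 1 / ((p - i : ℕ) : ℚ) ^ m + 1 / (i : ℚ) ^ m + m * p * (1 / (i : ℚ) ^ (m + 1))
      = (((i : ℤ) ^ (m + 1) + i * (p - i) ^ m + m * p * (p - i) ^ m : ℤ) : ℚ)
        / ((i ^ (m + 1) * (p - i) ^ m : ℕ) : ℚ) := by
    have hi0 : (i : ℚ) ≠ 0 := by exact_mod_cast (by omega : i ≠ 0)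
    have hpi0 : (p : ℚ) - i ≠ 0 := by rw [sub_ne_zero]; exact_mod_cast hip.ne'
    push_cast [hip.le]
    field_simp
    ring
  rw [key]
  refine PadicPowDvd.div_natCast
    (PadicPowDvd.intCast_iff.2 (sq_dvd_pow_succ_add_mul_sub_pow hm _ _)) fun h => ?_
  rcases (Nat.Prime.dvd_mul hp.out).1 h with h | h
  exacts [hpi (hp.out.dvd_of_dvd_pow h), hpi' (hp.out.dvd_of_dvd_pow h)]

theorem padicPowDvd_two_genHarmonic_of_odd {m : ℕ} (hm : Odd m) (hmp : m + 4 ≤ p) :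
    PadicPowDvd p 2 (genHarmonic (p - 1) m) := by
  have hm1 := hm.pos
  have hsum : 2 * genHarmonic (p - 1) m = ∑ i ∈ Icc 1 (p - 1),
      (1 / ((p - i : ℕ) : ℚ) ^ m + 1 / (i : ℚ) ^ m + m * p * (1 / (i : ℚ) ^ (m + 1)))
      - m * p * genHarmonic (p - 1) (m + 1) := by
    rw [two_mul]
    nth_rw 1 [genHarmonic_eq_sum_reflect, Nat.sub_add_cancel hp.out.one_le]
    rw [genHarmonic, genHarmonic, sum_add_distrib, sum_add_distrib, ← mul_sum]
    ring
  refine PadicPowDvd.of_natCast_mul (b := 2) (Nat.not_dvd_of_pos_of_lt two_pos (by omega)) ?_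
  rw [Nat.cast_ofNat, hsum]
  have hnext := ((PadicPowDvd.natCast m).mul PadicPowDvd.self).mul
    (padicPowDvd_one_genHarmonic (p := p) (m := m + 1) (by omega) (by omega))
  refine (PadicPowDvd.sum fun i hi => ?_).sub hnext
  rw [mem_Icc] at hi
  exact padicPowDvd_two_reflect hm hi.1 (by omega)

lemma padicPowDvd_newton_term {n k j a b : ℕ} (he : PadicPowDvd p a (elemSymH n (k - j)))
    (hh : PadicPowDvd p b (genHarmonic n j)) :
    PadicPowDvd p (a + b) ((-1) ^ (j + 1) * elemSymH n (k - j) * genHarmonic n j) := by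
  simpa only [zero_add] using ((PadicPowDvd.neg_one_pow _).mul he).mul hh

lemma padicPowDvd_zero_elemSymH (j : ℕ) : PadicPowDvd p 0 (elemSymH (p - 1) j) := by
  refine PadicPowDvd.sum fun t ht => PadicPowDvd.prod fun i hi => ?_
  have hi := mem_Icc.1 ((mem_powersetCard.1 ht).1 hi)
  exact PadicPowDvd.one.div_natCast (Nat.not_dvd_of_pos_of_lt hi.1 (by omega))

theorem padicPowDvd_one_elemSymH {j : ℕ} (hj1 : 1 ≤ j) (hjp : j + 2 ≤ p) :
    PadicPowDvd p 1 (elemSymH (p - 1) j) := by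
  refine PadicPowDvd.of_natCast_mul (Nat.not_dvd_of_pos_of_lt hj1 (by omega)) ?_
  rw [mul_elemSymH_eq_sum _ hj1]
  refine PadicPowDvd.sum fun i hi => ?_
  rw [mem_Icc] at hi
  exact padicPowDvd_newton_term (padicPowDvd_zero_elemSymH _)
    (padicPowDvd_one_genHarmonic hi.1 (by omega))

theorem padicPowDvd_two_elemSymH_of_odd {j : ℕ} (hj : Odd j) (hjp : j + 4 ≤ p) :
    PadicPowDvd p 2 (elemSymH (p - 1) j) := by
  have hj1 := hj.pos
  refine PadicPowDvd.of_natCast_mul (Nat.not_dvd_of_pos_of_lt hj1 (by omega)) ?_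
  rw [mul_elemSymH_eq_sum _ hj1]
  refine PadicPowDvd.sum fun i hi => ?_
  rw [mem_Icc] at hi
  rcases Nat.even_or_odd i with hi' | hi'
  · have : i < j := lt_of_le_of_ne hi.2 fun h => (Nat.not_even_iff_odd.2 hj) (h ▸ hi')
    exact padicPowDvd_newton_term (padicPowDvd_one_elemSymH (by omega) (by omega))
      (padicPowDvd_one_genHarmonic hi.1 (by omega))
  · exact padicPowDvd_newton_term (padicPowDvd_zero_elemSymH _)
      (padicPowDvd_two_genHarmonic_of_odd hi' (by omega))

end Congruences

theorem stmt11_general (p r : ℕ) (hp : p.Prime)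
    (hrodd : Odd r) (hpr : r + 4 ≤ p) :
    elemSymH (p - 1) r = (1 / (r : ℚ)) * genHarmonic (p - 1) r ∨
    padicValRat p (elemSymH (p - 1) r - (1 / (r : ℚ)) * genHarmonic (p - 1) r) ≥ 3 := by
  have := Fact.mk hp
  have hr1 := hrodd.pos
  have hdiff : PadicPowDvd p 3 (r * elemSymH (p - 1) r - genHarmonic (p - 1) r) := by
    rw [mul_elemSymH_sub_genHarmonic _ hrodd]
    refine PadicPowDvd.sum fun j hj => ?_
    rw [mem_Icc] at hj
    rcases Nat.even_or_odd j with hj' | hj'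
    · exact padicPowDvd_newton_term
        (padicPowDvd_two_elemSymH_of_odd (Nat.Odd.sub_even (by omega) hrodd hj') (by omega))
        (padicPowDvd_one_genHarmonic hj.1 (by omega))
    · exact padicPowDvd_newton_term (padicPowDvd_one_elemSymH (by omega) (by omega))
        (padicPowDvd_two_genHarmonic_of_odd hj' (by omega))
  have hfactor : r * elemSymH (p - 1) r - genHarmonic (p - 1) r
      = r * (elemSymH (p - 1) r - (1 / (r : ℚ)) * genHarmonic (p - 1) r) := by
    have hr : (r : ℚ) ≠ 0 := by exact_mod_cast hr1.ne'
    field_simp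
  rw [hfactor] at hdiff
  exact (PadicPowDvd.of_natCast_mul (Nat.not_dvd_of_pos_of_lt hr1 (by omega)) hdiff
    ).eq_zero_or_le_padicValRat.imp sub_eq_zero.1 id

theorem stmt11 (p r : ℕ) (hp : p.Prime) (hodd : Odd p)
    (hr1 : 1 ≤ r) (hrodd : Odd r) (hpr : r + 4 ≤ p) :
    elemSymH (p - 1) r = (1 / (r : ℚ)) * genHarmonic (p - 1) r ∨
    padicValRat p (elemSymH (p - 1) r - (1 / (r : ℚ)) * genHarmonic (p - 1) r) ≥ 3 :=
  stmt11_general p r hp hrodd hpr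
end

section
/- Let p be an odd prime and let r ≥ 2 be an even integer with p ≥ r+3. Then H(p-1, r) ≡ -(1/r)·H_{p-1}^{(r)} (mod p^2), i.e., v_p(H(p-1,r) + (1/r)·H_{p-1}^{(r)}) ≥ 2 (with the convention that this sum may be zero). -/
open Finset

theorem Finset.sum_pow_eq_mul_esymm_sub_sum {ι R : Type*} [CommRing R] (s : Finset ι)
    (f : ι → R) {k : ℕ} (hk : 0 < k) :
    ∑ i ∈ s, f i ^ k = (-1) ^ (k + 1) * k * (s.val.map f).esymm k -
      ∑ a ∈ antidiagonal k with a.1 ∈ Set.Ioo 0 k,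
        (-1) ^ a.1 * (s.val.map f).esymm a.1 * ∑ i ∈ s, f i ^ a.2 := by
  have aeval_esymm (j : ℕ) :
      MvPolynomial.aeval (fun i : s => f i) (MvPolynomial.esymm s R j) = (s.val.map f).esymm j := by
    rw [MvPolynomial.aeval_esymm_eq_multiset_esymm, univ_eq_attach, attach_val]
    exact congrArg (Multiset.esymm · j) (Multiset.attach_map_val' _ f)
  have aeval_psum (j : ℕ) :
      MvPolynomial.aeval (fun i : s => f i) (MvPolynomial.psum s R j) = ∑ i ∈ s, f i ^ j := by
    simp [MvPolynomial.psum, univ_eq_attach, sum_attach s fun i => f i ^ j]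
  have h := congrArg (MvPolynomial.aeval fun i : s => f i)
    (MvPolynomial.psum_eq_mul_esymm_sub_sum s R k hk)
  simp only [map_sub, map_mul, map_sum, map_pow, map_neg, map_one, map_natCast, aeval_esymm,
    aeval_psum] at h
  exact h

theorem ZMod.sum_range_natCast {M : Type*} [AddCommMonoid M] (n : ℕ) [NeZero n]
    (f : ZMod n → M) : ∑ i ∈ range n, f i = ∑ x, f x :=
  sum_nbij' Nat.cast ZMod.val (by simp) (fun x _ => mem_range.2 x.val_lt)
    (fun _ hi => ZMod.val_cast_of_lt (mem_range.1 hi)) (fun x _ => ZMod.natCast_zmod_val x)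
    (fun _ _ => rfl)

theorem elemSymH_eq_esymm (n k : ℕ) :
    elemSymH n k = ((Icc 1 n).val.map fun i : ℕ => (1 : ℚ) / i).esymm k :=
  (esymm_map_val _ _ _).symm

theorem genHarmonic_eq_sum_pow (n j : ℕ) :
    genHarmonic n j = ∑ i ∈ Icc 1 n, ((1 : ℚ) / i) ^ j := by
  simp only [genHarmonic, one_div_pow]

theorem genHarmonic_eq_mul_elemSymH_sub_sum (n : ℕ) {k : ℕ} (hk : 0 < k) :
    genHarmonic n k = (-1) ^ (k + 1) * k * elemSymH n k -
      ∑ a ∈ antidiagonal k with a.1 ∈ Set.Ioo 0 k,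
        (-1) ^ a.1 * elemSymH n a.1 * genHarmonic n a.2 := by
  simp only [elemSymH_eq_esymm, genHarmonic_eq_sum_pow]
  exact sum_pow_eq_mul_esymm_sub_sum _ _ hk

section PrimeModulus

variable {p : ℕ} [hp : Fact p.Prime]

theorem padicNorm_natCast_of_pos_of_lt {k : ℕ} (h0 : 0 < k) (hk : k < p) :
    padicNorm p k = 1 :=
  (padicNorm.nat_eq_one_iff k).2 (Nat.not_dvd_of_pos_of_lt h0 hk)

theorem padicNorm_intCast_le_of_dvd {z : ℤ} (h : (p : ℤ) ∣ z) : padicNorm p z ≤ (p : ℚ)⁻¹ := by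
  simpa using (padicNorm.dvd_iff_norm_le (n := 1)).1 (by simpa using h)

theorem prime_dvd_sum_Icc_pow {m : ℕ} (hm0 : 0 < m) (hm : m < p - 1) :
    p ∣ ∑ i ∈ Icc 1 (p - 1), i ^ m := by
  have hsub : ∑ i ∈ Icc 1 (p - 1), i ^ m = ∑ i ∈ range p, i ^ m :=
    sum_subset (fun i hi => by rw [mem_Icc] at hi; rw [mem_range]; omega) fun i hi hi' => by
      rw [mem_range] at hi; rw [mem_Icc] at hi'
      rw [show i = 0 by omega, zero_pow hm0.ne']
  rw [hsub, ← ZMod.natCast_eq_zero_iff]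
  push_cast
  rw [ZMod.sum_range_natCast p fun x => x ^ m]
  exact FiniteField.sum_pow_lt_card_sub_one _ _ (by rwa [ZMod.card])

theorem padicNorm_one_div_pow_sub_pow_le {i j : ℕ} (hi0 : 0 < i) (hi : i < p) (hj : j ≤ p - 1) :
    padicNorm p (1 / (i : ℚ) ^ j - (i : ℚ) ^ (p - 1 - j)) ≤ (p : ℚ)⁻¹ := by
  have hfermat : (p : ℤ) ∣ 1 - (i : ℤ) ^ (p - 1) := by
    rw [← ZMod.intCast_zmod_eq_zero_iff_dvd]
    push_cast
    rw [ZMod.pow_card_sub_one_eq_one, sub_self]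
    exact fun h => Nat.not_dvd_of_pos_of_lt hi0 hi ((ZMod.natCast_eq_zero_iff i p).1 h)
  have hiq : (i : ℚ) ≠ 0 := by positivity
  have hsplit : 1 / (i : ℚ) ^ j - (i : ℚ) ^ (p - 1 - j) =
      ((1 - (i : ℤ) ^ (p - 1) : ℤ) : ℚ) / (i : ℚ) ^ j := by
    push_cast
    rw [← Nat.sub_add_cancel hj, Nat.add_sub_cancel, pow_add]
    field_simp
  rw [hsplit, padicNorm.div, IsAbsoluteValue.abv_pow (padicNorm p),
    padicNorm_natCast_of_pos_of_lt hi0 hi, one_pow, div_one]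
  exact padicNorm_intCast_le_of_dvd hfermat

theorem padicNorm_genHarmonic_le {j : ℕ} (hj0 : 0 < j) (hj : j ≤ p - 2) :
    padicNorm p (genHarmonic (p - 1) j) ≤ (p : ℚ)⁻¹ := by
  have hsplit : genHarmonic (p - 1) j =
      ∑ i ∈ Icc 1 (p - 1), (1 / (i : ℚ) ^ j - (i : ℚ) ^ (p - 1 - j)) +
        ((∑ i ∈ Icc 1 (p - 1), i ^ (p - 1 - j) : ℕ) : ℚ) := by
    push_cast
    rw [sum_sub_distrib, sub_add_cancel, genHarmonic]
  rw [hsplit]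
  refine padicNorm.nonarchimedean.trans (max_le ?_ ?_)
  · refine padicNorm.sum_le' (fun i hi => ?_) (by positivity)
    rw [mem_Icc] at hi
    exact padicNorm_one_div_pow_sub_pow_le (by omega) (by omega) (by omega)
  · exact_mod_cast padicNorm_intCast_le_of_dvd
      (Int.natCast_dvd_natCast.2 (prime_dvd_sum_Icc_pow (by omega) (by omega)))

theorem padicNorm_neg_one_pow (n : ℕ) : padicNorm p ((-1 : ℚ) ^ n) = 1 := by
  rw [IsAbsoluteValue.abv_pow (padicNorm p), padicNorm.neg, padicNorm.one, one_pow]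

theorem intCast_le_padicValRat_of_padicNorm_le {x : ℚ} (hx : x ≠ 0) {m : ℕ}
    (h : padicNorm p x ≤ (p : ℚ)⁻¹ ^ m) : (m : ℤ) ≤ padicValRat p x := by
  rw [padicNorm.eq_zpow_of_nonzero hx, inv_pow, ← zpow_natCast, ← zpow_neg,
    zpow_le_zpow_iff_right₀ (by exact_mod_cast hp.out.one_lt)] at h
  omega

theorem padicNorm_sum_elemSymH_mul_genHarmonic_le {k : ℕ} (hk : k ≤ p - 1)
    (he : ∀ a, 0 < a → a < k → padicNorm p (elemSymH (p - 1) a) ≤ (p : ℚ)⁻¹) :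
    padicNorm p (∑ a ∈ antidiagonal k with a.1 ∈ Set.Ioo 0 k,
      (-1) ^ a.1 * elemSymH (p - 1) a.1 * genHarmonic (p - 1) a.2) ≤ (p : ℚ)⁻¹ ^ 2 := by
  refine padicNorm.sum_le' (fun ⟨a, b⟩ hab => ?_) (by positivity)
  simp only [mem_filter, HasAntidiagonal.mem_antidiagonal, Set.mem_Ioo] at hab
  rw [padicNorm.mul, padicNorm.mul, padicNorm_neg_one_pow, one_mul, sq]
  exact mul_le_mul (he a hab.2.1 hab.2.2) (padicNorm_genHarmonic_le (by omega) (by omega))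
    (padicNorm.nonneg _) (by positivity)

theorem padicNorm_elemSymH_le {k : ℕ} (hk0 : 0 < k) (hk : k ≤ p - 2) :
    padicNorm p (elemSymH (p - 1) k) ≤ (p : ℚ)⁻¹ := by
  induction k using Nat.strong_induction_on with
  | _ k ih =>
    have hp_inv_le_one : (p : ℚ)⁻¹ ≤ 1 :=
      inv_le_one_of_one_le₀ (by exact_mod_cast hp.out.one_le)
    have htail := padicNorm_sum_elemSymH_mul_genHarmonic_le (p := p) (k := k) (by omega)
      fun a ha0 hak => ih a hak ha0 (by omega)
    have hnewton := genHarmonic_eq_mul_elemSymH_sub_sum (p - 1) hk0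
    have hke : (-1) ^ (k + 1) * k * elemSymH (p - 1) k = genHarmonic (p - 1) k +
        ∑ a ∈ antidiagonal k with a.1 ∈ Set.Ioo 0 k,
          (-1) ^ a.1 * elemSymH (p - 1) a.1 * genHarmonic (p - 1) a.2 := by
      rw [hnewton]; ring
    have hnorm := congrArg (padicNorm p) hke
    rw [padicNorm.mul, padicNorm.mul, padicNorm_neg_one_pow, one_mul,
      padicNorm_natCast_of_pos_of_lt hk0 (by omega), one_mul] at hnorm
    rw [hnorm]
    refine padicNorm.nonarchimedean.trans (max_le (padicNorm_genHarmonic_le hk0 hk) ?_)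
    exact htail.trans (pow_le_of_le_one (by positivity) hp_inv_le_one two_ne_zero)

end PrimeModulus

theorem stmt12_general (p r : ℕ) (hp : p.Prime)
    (hr2 : 2 ≤ r) (hreven : Even r) (hpr : r + 3 ≤ p) :
    elemSymH (p - 1) r + (1 / (r : ℚ)) * genHarmonic (p - 1) r = 0 ∨
    padicValRat p (elemSymH (p - 1) r + (1 / (r : ℚ)) * genHarmonic (p - 1) r) ≥ 2 := by
  have := Fact.mk hp
  set tail := ∑ a ∈ antidiagonal r with a.1 ∈ Set.Ioo 0 r,
    (-1) ^ a.1 * elemSymH (p - 1) a.1 * genHarmonic (p - 1) a.2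
  have hsign : (-1 : ℚ) ^ (r + 1) = -1 := by rw [pow_succ, hreven.neg_one_pow, one_mul]
  have hr : (r : ℚ) ≠ 0 := by positivity
  have hG : elemSymH (p - 1) r + (1 / (r : ℚ)) * genHarmonic (p - 1) r = -(1 / r) * tail := by
    rw [genHarmonic_eq_mul_elemSymH_sub_sum (p - 1) (by omega), hsign]
    field_simp
    ring
  have hnorm : padicNorm p (-(1 / r) * tail) ≤ (p : ℚ)⁻¹ ^ 2 := by
    rw [padicNorm.mul, padicNorm.neg, padicNorm.div, padicNorm.one,
      padicNorm_natCast_of_pos_of_lt (by omega) (by omega), div_one, one_mul]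
    exact padicNorm_sum_elemSymH_mul_genHarmonic_le (by omega)
      fun a ha0 har => padicNorm_elemSymH_le ha0 (by omega)
  rw [hG]
  rcases eq_or_ne (-(1 / (r : ℚ)) * tail) 0 with h | h
  · exact Or.inl h
  · exact Or.inr (by exact_mod_cast intCast_le_padicValRat_of_padicNorm_le h hnorm)

theorem stmt12 (p r : ℕ) (hp : p.Prime) (hodd : Odd p)
    (hr2 : 2 ≤ r) (hreven : Even r) (hpr : r + 3 ≤ p) :
    elemSymH (p - 1) r + (1 / (r : ℚ)) * genHarmonic (p - 1) r = 0 ∨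
    padicValRat p (elemSymH (p - 1) r + (1 / (r : ℚ)) * genHarmonic (p - 1) r) ≥ 2 :=
  stmt12_general p r hp hr2 hreven hpr
end

section
/- Let p ≥ 5 be a prime and let a and n be positive integers with gcd(a,p) = 1. For any odd integer k with 0 ≤ k ≤ ap^n, one has v_p(s_{p^n}(ap^n, ap^n - k)) ≥ n, where s_{p^n} denotes the p^n-th Stirling numbers of the first kind. -/
/-- The `m`-th Stirling number of the first kind `s_m(n,k)`, defined by
`(x+m)(x+m+1)⋯(x+m+n-1) = Σ_{k=0}^{n} s_m(n,k) x^k`. -/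
noncomputable def stirlingFirstShift (m n k : ℕ) : ℕ :=
  (∏ i ∈ Finset.range n, (Polynomial.X + Polynomial.C (m + i))).coeff k

/-!
Modulo `q = p ^ n`, the shifted product `(X + q)(X + q + 1)⋯(X + q + N - 1)` is the rising
factorial `X (X + 1)⋯(X + N - 1)`, and since `q ∣ N` its roots `0, -1, …, -(N - 1)` are, modulo
`q`, permuted by `x ↦ -x`. Hence `f(-X) = (-1)^N f(X)` mod `q`, so every coefficient of `X ^ j`
with `N + j` odd is killed by `2`, hence by the odd number `q`. That coefficient is positive, so
its `p`-adic valuation is at least `n`.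
-/

open Polynomial Finset

namespace Polynomial

theorem coeff_comp_neg_X {R : Type*} [CommRing R] (f : R[X]) (k : ℕ) :
    (f.comp (-X)).coeff k = (-1) ^ k * f.coeff k := by
  rw [show (-X : R[X]) = C (-1) * X by simp, comp_C_mul_X_coeff, mul_comm]

theorem two_mul_coeff_eq_zero_of_comp_neg_X {R : Type*} [CommRing R] {f : R[X]} {N j : ℕ}
    (hf : f.comp (-X) = (-1) ^ N * f) (hj : Odd (N + j)) : 2 * f.coeff j = 0 := by
  have h := congrArg (coeff · j) hf
  simp only [coeff_comp_neg_X, ← C_1, ← C_neg, ← C_pow, coeff_C_mul] at h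
  have hsign : (-1 : R) ^ N * (-1) ^ j = -1 := by rw [← pow_add, hj.neg_one_pow]
  have hsq : ((-1 : R) ^ j) ^ 2 = 1 := by
    rw [← pow_mul, mul_comm, pow_mul, neg_one_sq, one_pow]
  linear_combination (-1 : R) ^ j * h + f.coeff j * hsign - f.coeff j * hsq

end Polynomial

section Pochhammer

variable (R : Type*) [CommRing R]

theorem ascPochhammer_comp_neg_X (n : ℕ) :
    (ascPochhammer R n).comp (-X) = (-1) ^ n * descPochhammer R n := by
  induction n with
  | zero => simp
  | succ n ih =>
    rw [ascPochhammer_succ_right, descPochhammer_succ_right, mul_comp, ih, add_comp, X_comp,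
      natCast_comp]
    ring

theorem descPochhammer_eq_ascPochhammer_comp (n : ℕ) :
    descPochhammer R n = (ascPochhammer R n).comp (X - (n : R[X]) + 1) := by
  simpa [map_comp] using congrArg (map (Int.castRingHom R)) (descPochhammer_eq_ascPochhammer n)

variable {R}

theorem ascPochhammer_comp_X_add_one_of_natCast_eq_zero {n : ℕ} (hn : (n : R) = 0) :
    (ascPochhammer R n).comp (X + 1) = ascPochhammer R n := by
  cases n with
  | zero => simp
  | succ n =>
    rw [ascPochhammer_succ_comp_X_add_one, add_eq_left, ← Nat.cast_smul_eq_nsmul R, hn, zero_smul]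

theorem ascPochhammer_comp_neg_X_of_natCast_eq_zero {n : ℕ} (hn : (n : R) = 0) :
    (ascPochhammer R n).comp (-X) = (-1) ^ n * ascPochhammer R n := by
  rw [ascPochhammer_comp_neg_X, descPochhammer_eq_ascPochhammer_comp, ← map_natCast C, hn,
    C_0, sub_zero, ascPochhammer_comp_X_add_one_of_natCast_eq_zero hn]

end Pochhammer

theorem prod_range_X_add_C_eq_ascPochhammer_comp {R : Type*} [CommSemiring R] (m : R) (n : ℕ) :
    ∏ i ∈ range n, (X + C (m + i)) = (ascPochhammer R n).comp (X + C m) := by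
  induction n with
  | zero => simp
  | succ n ih =>
    rw [prod_range_succ, ih, ascPochhammer_succ_right, mul_comp, add_comp, X_comp, natCast_comp,
      C_add, map_natCast, add_assoc]

theorem stirlingFirstShift_cast_eq_coeff_ascPochhammer {R : Type*} [CommSemiring R] {m : ℕ}
    (hm : (m : R) = 0) (n k : ℕ) :
    (stirlingFirstShift m n k : R) = (ascPochhammer R n).coeff k := by
  have h := prod_range_X_add_C_eq_ascPochhammer_comp m n
  simp only [Nat.cast_id] at h
  rw [stirlingFirstShift, h, ← Nat.coe_castRingHom, ← coeff_map, map_comp, ascPochhammer_map,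
    Polynomial.map_add, map_X, map_C, Nat.coe_castRingHom, hm, C_0, add_zero, comp_X]

theorem stirlingFirstShift_pos {m n k : ℕ} (hm : 0 < m) (hk : k ≤ n) :
    0 < stirlingFirstShift m n k := by
  rw [stirlingFirstShift, prod_X_add_C_coeff _ _ (by rwa [card_range])]
  refine sum_pos (fun t _ => prod_pos fun i _ => by omega) ?_
  rw [powersetCard_nonempty, card_range]
  omega

theorem dvd_stirlingFirstShift {q m N j : ℕ} (hq : Odd q) (hm : q ∣ m) (hN : q ∣ N)
    (hj : Odd (N + j)) : q ∣ stirlingFirstShift m N j := by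
  have h2 : ((2 * stirlingFirstShift m N j : ℕ) : ZMod q) = 0 := by
    rw [Nat.cast_mul, Nat.cast_ofNat, stirlingFirstShift_cast_eq_coeff_ascPochhammer
      ((ZMod.natCast_eq_zero_iff _ _).2 hm)]
    exact two_mul_coeff_eq_zero_of_comp_neg_X
      (ascPochhammer_comp_neg_X_of_natCast_eq_zero ((ZMod.natCast_eq_zero_iff _ _).2 hN)) hj
  exact (Nat.coprime_two_right.2 hq).dvd_of_dvd_mul_left ((ZMod.natCast_eq_zero_iff _ _).1 h2)

theorem stmt16_general (p a n k : ℕ) (hp : p.Prime) (hp5 : 5 ≤ p)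
    (hkodd : Odd k) (hk : k ≤ a * p ^ n) :
    padicValNat p (stirlingFirstShift (p ^ n) (a * p ^ n) (a * p ^ n - k)) ≥ n := by
  have hdvd : p ^ n ∣ stirlingFirstShift (p ^ n) (a * p ^ n) (a * p ^ n - k) := by
    refine dvd_stirlingFirstShift ((hp.odd_of_ne_two (by omega)).pow) dvd_rfl
      (dvd_mul_left _ _) ?_
    obtain ⟨r, rfl⟩ := hkodd
    exact ⟨a * p ^ n - r - 1, by omega⟩
  have : Fact p.Prime := ⟨hp⟩
  exact (padicValNat_dvd_iff_le
    (stirlingFirstShift_pos (pow_pos hp.pos n) (Nat.sub_le _ _)).ne').1 hdvd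

theorem stmt16 (p a n k : ℕ) (hp : p.Prime) (hp5 : 5 ≤ p)
    (ha : 1 ≤ a) (hn : 1 ≤ n) (hgcd : Nat.gcd a p = 1)
    (hkodd : Odd k) (hk : k ≤ a * p ^ n) :
    padicValNat p (stirlingFirstShift (p ^ n) (a * p ^ n) (a * p ^ n - k)) ≥ n :=
  stmt16_general p a n k hp hp5 hkodd hk
end
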